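/- arXiv:math/0401196 — 3 statements merged into one kernel-verified Lean document; each statement's English description precedes it below -/
import Mathlib

section
/- Let [a,b] be a closed bounded interval, X a Banach space, and f : [a,b] → X a Bochner integrable function. Then there exists a sequence of subdivisions a = t_k^0 < t_k^1 < ... < t_k^{i_k} = b of [a,b], whose mesh size max_i (t_k^i - t_k^{i-1}) tends to 0 as k → ∞, such that the sums ∑_{i=1}^{i_k} ∫_{t_k^{i-1}}^{t_k^i} ‖f(t_k^i) - f(t)‖ dt tend to 0 as k → ∞. -/
/-!
Approximate `f` in `L¹(a, b)` by a continuous `g`. Splitting `‖f(tᵢ₊₁) - f(s)‖` through `g`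
bounds the sum by `∑ (tᵢ₊₁ - tᵢ) ‖f - g‖(tᵢ₊₁)`, plus the oscillation of `g` over the pieces,
plus `∫ ‖f - g‖`. The last two are small for any fine subdivision, by uniform continuity of `g`.
For the first, take a uniform grid of step `h` and put each node `tᵢ₊₁` in the `i`-th cell at a
point where `‖f - g‖` is at most its mean over the cell; since the pieces have length at most `2h`,
the sum is at most `2 ∫ ‖f - g‖`, up to the forced last node `b`, which costs `2h ‖f(b) - g(b)‖`.
-/

open MeasureTheory Set Filter Topology

theorem sum_setIntegral_Ioc_of_monotone {ψ : ℝ → ℝ} {t : ℕ → ℝ} (ht : Monotone t) {n : ℕ}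
    (hψ : IntegrableOn ψ (Ioc (t 0) (t n))) :
    ∑ i ∈ Finset.range n, ∫ s in Ioc (t i) (t (i + 1)), ψ s = ∫ s in Ioc (t 0) (t n), ψ s := by
  have hsub : ∀ i < n, Ioc (t i) (t (i + 1)) ⊆ Ioc (t 0) (t n) := fun i hi =>
    Ioc_subset_Ioc (ht (Nat.zero_le i)) (ht hi)
  rw [← intervalIntegral.integral_of_le (ht (Nat.zero_le n)),
    ← intervalIntegral.sum_integral_adjacent_intervals fun i hi =>
      (intervalIntegrable_iff_integrableOn_Ioc_of_le (ht i.le_succ)).2 (hψ.mono_set (hsub i hi))]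
  exact Finset.sum_congr rfl fun i _ => (intervalIntegral.integral_of_le (ht i.le_succ)).symm

theorem exists_mem_Ioc_mul_le_setIntegral {φ : ℝ → ℝ} {c d : ℝ} (hcd : c < d)
    (hφ : IntegrableOn φ (Ioc c d)) : ∃ x ∈ Ioc c d, φ x * (d - c) ≤ ∫ s in Ioc c d, φ s := by
  have hvol : volume (Ioc c d) = ENNReal.ofReal (d - c) := Real.volume_Ioc
  obtain ⟨x, hx, hle⟩ := exists_le_setAverage (by simp [hvol, hcd]) (by simp [hvol]) hφ
  refine ⟨x, hx, ?_⟩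
  rwa [setAverage_eq, Real.volume_real_Ioc_of_le hcd.le, smul_eq_mul, ← div_eq_inv_mul,
    le_div_iff₀ (sub_pos.2 hcd)] at hle

theorem strictMono_and_sub_le_of_succ_mem_Ioc {c t : ℕ → ℝ} {h : ℝ} (hh : 0 ≤ h)
    (hc : ∀ k, c (k + 1) = c k + h) (ht0 : t 0 = c 0)
    (ht : ∀ k, t (k + 1) ∈ Ioc (c k) (c (k + 1))) :
    StrictMono t ∧ ∀ k, t (k + 1) - t k ≤ 2 * h := by
  have hbounds : ∀ k, c k - h ≤ t k ∧ t k ≤ c k := by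
    rintro (_ | k)
    · rw [ht0]; exact ⟨by linarith, le_rfl⟩
    · have := ht k
      rw [hc] at this ⊢
      exact ⟨by linarith [this.1], this.2⟩
  refine ⟨strictMono_nat_of_lt_succ fun k => (hbounds k).2.trans_lt (ht k).1, fun k => ?_⟩
  linarith [(hbounds k).1, (ht k).2, hc k]

theorem exists_subdivision_sum_mul_le {φ : ℝ → ℝ} {a b : ℝ} (hab : a < b) (hφ0 : ∀ x, 0 ≤ φ x)
    (hφ : IntegrableOn φ (Ioc a b)) {n : ℕ} (hn : 0 < n) :
    ∃ t : ℕ → ℝ, StrictMono t ∧ t 0 = a ∧ t n = b ∧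
      (∀ i, t (i + 1) - t i ≤ 2 * ((b - a) / n)) ∧
      ∑ i ∈ Finset.range n, (t (i + 1) - t i) * φ (t (i + 1))
        ≤ 2 * (∫ s in Ioc a b, φ s) + 2 * ((b - a) / n) * φ b := by
  obtain ⟨m, rfl⟩ := Nat.exists_eq_succ_of_ne_zero hn.ne'
  set h := (b - a) / (m + 1 : ℕ) with hh_def
  have hh : 0 < h := div_pos (sub_pos.2 hab) (by positivity)
  set c : ℕ → ℝ := fun j => a + j * h with hc_def
  have hc_mono : Monotone c := fun i j hij => by
    simp only [hc_def]; gcongr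
  have hc_succ : ∀ j, c (j + 1) = c j + h := fun j => by simp only [hc_def]; push_cast; ring
  have hc0 : c 0 = a := by simp [hc_def]
  have hcn : c (m + 1) = b := by simp only [hc_def, hh_def]; field_simp; ring
  have hφc : IntegrableOn φ (Ioc (c 0) (c (m + 1))) := by rwa [hc0, hcn]
  have hcell : ∀ j < m, ∃ x ∈ Ioc (c j) (c (j + 1)),
      φ x * h ≤ ∫ s in Ioc (c j) (c (j + 1)), φ s := by
    intro j hj
    have hsub : Ioc (c j) (c (j + 1)) ⊆ Ioc (c 0) (c (m + 1)) :=
      Ioc_subset_Ioc (hc_mono (Nat.zero_le j)) (hc_mono (by omega))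
    have := exists_mem_Ioc_mul_le_setIntegral (by linarith [hc_succ j]) (hφc.mono_set hsub)
    rwa [hc_succ, add_sub_cancel_left, ← hc_succ] at this
  choose! v hv_mem hv_le using hcell
  obtain ⟨t, ht0, ht_succ⟩ :
      ∃ t : ℕ → ℝ, t 0 = a ∧ ∀ k, t (k + 1) = if k < m then v k else c (k + 1) :=
    ⟨fun j => Nat.casesOn j a fun k => if k < m then v k else c (k + 1), rfl, fun _ => rfl⟩
  have ht_mem : ∀ k, t (k + 1) ∈ Ioc (c k) (c (k + 1)) := fun k => by
    rw [ht_succ]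
    split_ifs with hk
    · exact hv_mem k hk
    · exact ⟨by linarith [hc_succ k], le_rfl⟩
  have htm : t (m + 1) = b := by simp [ht_succ, hcn]
  obtain ⟨ht_strict, ht_mesh⟩ :=
    strictMono_and_sub_le_of_succ_mem_Ioc hh.le hc_succ (ht0.trans hc0.symm) ht_mem
  refine ⟨t, ht_strict, ht0, htm, ht_mesh, ?_⟩
  calc ∑ k ∈ Finset.range (m + 1), (t (k + 1) - t k) * φ (t (k + 1))
      ≤ ∑ k ∈ Finset.range (m + 1), 2 * h * φ (t (k + 1)) :=
        Finset.sum_le_sum fun k _ => mul_le_mul_of_nonneg_right (ht_mesh k) (hφ0 _)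
    _ = 2 * (∑ k ∈ Finset.range m, φ (v k) * h) + 2 * h * φ b := by
        rw [Finset.sum_range_succ, htm, Finset.mul_sum]
        congr 1
        refine Finset.sum_congr rfl fun k hk => ?_
        rw [ht_succ, if_pos (Finset.mem_range.1 hk)]
        ring
    _ ≤ 2 * (∑ k ∈ Finset.range (m + 1), ∫ s in Ioc (c k) (c (k + 1)), φ s) + 2 * h * φ b := by
        gcongr 2 * ?_ + _
        rw [Finset.sum_range_succ]
        refine le_add_of_le_of_nonneg (Finset.sum_le_sum fun k hk =>
          hv_le k (Finset.mem_range.1 hk)) (setIntegral_nonneg measurableSet_Ioc fun s _ => hφ0 s)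
    _ = 2 * (∫ s in Ioc a b, φ s) + 2 * h * φ b := by
        rw [sum_setIntegral_Ioc_of_monotone hc_mono hφc, hc0, hcn]

section

variable {X : Type*} [NormedAddCommGroup X]

noncomputable def rightTagDefect (f : ℝ → X) (t : ℕ → ℝ) (n : ℕ) : ℝ :=
  ∑ i ∈ Finset.range n, ∫ s in Ioc (t i) (t (i + 1)), ‖f (t (i + 1)) - f s‖

theorem rightTagDefect_le_of_norm_sub_le {g : ℝ → X} {t : ℕ → ℝ} {n : ℕ} {η : ℝ}
    (ht : ∀ i < n, t i ≤ t (i + 1))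
    (hg : ∀ i < n, ∀ s ∈ Ioc (t i) (t (i + 1)), ‖g (t (i + 1)) - g s‖ ≤ η) :
    rightTagDefect g t n ≤ η * (t n - t 0) := by
  rw [← Finset.sum_range_sub, Finset.mul_sum]
  refine Finset.sum_le_sum fun i hi => ?_
  have hi := Finset.mem_range.1 hi
  calc ∫ s in Ioc (t i) (t (i + 1)), ‖g (t (i + 1)) - g s‖
      ≤ ‖∫ s in Ioc (t i) (t (i + 1)), ‖g (t (i + 1)) - g s‖‖ := Real.le_norm_self _
    _ ≤ η * volume.real (Ioc (t i) (t (i + 1))) :=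
        norm_setIntegral_le_of_norm_le_const measure_Ioc_lt_top fun s hs => by
          simpa using hg i hi s hs
    _ = η * (t (i + 1) - t i) := by rw [Real.volume_real_Ioc_of_le (ht i hi)]

theorem rightTagDefect_le_add {f g : ℝ → X} {t : ℕ → ℝ} (ht : Monotone t) {n : ℕ}
    (hf : IntegrableOn f (Ioc (t 0) (t n))) (hg : IntegrableOn g (Ioc (t 0) (t n))) :
    rightTagDefect f t n ≤
      (∑ i ∈ Finset.range n, (t (i + 1) - t i) * ‖f (t (i + 1)) - g (t (i + 1))‖)
        + rightTagDefect g t n + ∫ s in Ioc (t 0) (t n), ‖f s - g s‖ := by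
  rw [← sum_setIntegral_Ioc_of_monotone (ψ := fun s => ‖f s - g s‖) ht (hf.sub hg).norm,
    rightTagDefect, rightTagDefect, ← Finset.sum_add_distrib, ← Finset.sum_add_distrib]
  refine Finset.sum_le_sum fun i hi => ?_
  have hsub : Ioc (t i) (t (i + 1)) ⊆ Ioc (t 0) (t n) :=
    Ioc_subset_Ioc (ht (Nat.zero_le i)) (ht (Finset.mem_range.1 hi))
  set I := Ioc (t i) (t (i + 1))
  set x := t (i + 1)
  have hfi : IntegrableOn f I := hf.mono_set hsub
  have hgi : IntegrableOn g I := hg.mono_set hsub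
  have hconst : ∀ y : X, IntegrableOn (fun _ => y) I :=
    fun y => integrableOn_const measure_Ioc_lt_top.ne
  have hA : IntegrableOn (fun _ => ‖f x - g x‖) I := (hconst _).norm
  have hB : IntegrableOn (fun s => ‖g x - g s‖) I := ((hconst _).sub hgi).norm
  have hC : IntegrableOn (fun s => ‖f s - g s‖) I := (hfi.sub hgi).norm
  calc ∫ s in I, ‖f x - f s‖
      ≤ ∫ s in I, (‖f x - g x‖ + ‖g x - g s‖ + ‖f s - g s‖) := by
        refine integral_mono ((hconst _).sub hfi).norm ((hA.add hB).add hC) fun s => ?_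
        rw [norm_sub_rev (f s)]
        exact (norm_sub_le_norm_sub_add_norm_sub _ (g s) _).trans
          (add_le_add_left (norm_sub_le_norm_sub_add_norm_sub _ _ _) _)
    _ = (x - t i) * ‖f x - g x‖ + (∫ s in I, ‖g x - g s‖) + ∫ s in I, ‖f s - g s‖ := by
        rw [integral_add (f := fun s => ‖f x - g x‖ + ‖g x - g s‖) (hA.add hB) hC,
          integral_add hA hB, setIntegral_const, smul_eq_mul,
          Real.volume_real_Ioc_of_le (ht i.le_succ)]

theorem exists_subdivision_rightTagDefect_lt [NormedSpace ℝ X] {f : ℝ → X} {a b : ℝ} (hab : a < b)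
    (hf : IntegrableOn f (Icc a b)) {ε : ℝ} (hε : 0 < ε) :
    ∃ (n : ℕ) (t : ℕ → ℝ), 0 < n ∧ t 0 = a ∧ t n = b ∧ (∀ i < n, t i < t (i + 1)) ∧
      (∀ i < n, t (i + 1) - t i < ε) ∧ rightTagDefect f t n < ε := by
  have hf' : IntegrableOn f (Ioc a b) := hf.mono_set Ioc_subset_Icc_self
  obtain ⟨g, hfg, hg⟩ := hf'.exists_boundedContinuous_integral_sub_le (show 0 < ε / 8 by positivity)
  set η := ε / (4 * (b - a))
  obtain ⟨δ, hδ, hgδ⟩ := Metric.uniformContinuousOn_iff.1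
    ((isCompact_Icc (a := a) (b := b)).uniformContinuousOn_of_continuous g.continuous.continuousOn)
    η (div_pos hε (by linarith))
  have hmesh : Tendsto (fun n : ℕ => 2 * ((b - a) / n)) atTop (𝓝 0) := by
    simpa using (tendsto_const_div_atTop_nhds_zero_nat (b - a)).const_mul 2
  have hlast : Tendsto (fun n : ℕ => 2 * ((b - a) / n) * ‖f b - g b‖) atTop (𝓝 0) := by
    simpa using hmesh.mul_const ‖f b - g b‖
  obtain ⟨n, hn, hnδ, hnε, hnb⟩ := ((eventually_gt_atTop 0).and <|
    (hmesh.eventually (gt_mem_nhds hδ)).and <| (hmesh.eventually (gt_mem_nhds hε)).and <|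
      hlast.eventually (gt_mem_nhds (show 0 < ε / 8 by positivity))).exists
  obtain ⟨t, ht_strict, ht0, htn, ht_mesh, ht_sum⟩ :=
    exists_subdivision_sum_mul_le hab (fun s => norm_nonneg (f s - g s))
      (hf'.sub hg).norm hn
  have ht_mono := ht_strict.monotone
  have ht_Icc : ∀ i ≤ n, t i ∈ Icc a b := fun i hi =>
    ⟨ht0 ▸ ht_mono (Nat.zero_le i), htn ▸ ht_mono hi⟩
  have hg_osc : ∀ i < n, ∀ s ∈ Ioc (t i) (t (i + 1)), ‖g (t (i + 1)) - g s‖ ≤ η := by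
    intro i hi s hs
    rw [← dist_eq_norm]
    refine (hgδ _ (ht_Icc _ hi) _ ⟨(ht_Icc i hi.le).1.trans hs.1.le, hs.2.trans (ht_Icc _ hi).2⟩
      ?_).le
    rw [Real.dist_eq, abs_of_nonneg (sub_nonneg.2 hs.2)]
    linarith [ht_mesh i, hs.1]
  refine ⟨n, t, hn, ht0, htn, fun i _ => ht_strict i.lt_succ_self,
    fun i _ => (ht_mesh i).trans_lt hnε, ?_⟩
  have hsplit := rightTagDefect_le_add ht_mono (ht0 ▸ htn ▸ hf') (ht0 ▸ htn ▸ hg)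
  have hosc : rightTagDefect g t n ≤ η * (t n - t 0) :=
    rightTagDefect_le_of_norm_sub_le (fun i _ => ht_mono i.le_succ) hg_osc
  rw [ht0, htn] at hsplit hosc
  have hηba : η * (b - a) = ε / 4 := by
    simp only [η]; field_simp [(sub_pos.2 hab).ne']
  -- budget: `2 · ε/8 + ε/8` for the tags, `ε/4` for the oscillation of `g`, `ε/8` for `∫ ‖f - g‖`
  linarith

end

theorem stmt0_general {X : Type*} [NormedAddCommGroup X] [NormedSpace ℝ X]
    (a b : ℝ) (hab : a < b) (f : ℝ → X)
    (hf : IntegrableOn f (Set.Icc a b) volume) :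
    ∃ (ik : ℕ → ℕ) (t : ℕ → ℕ → ℝ),
      (∀ k, 1 ≤ ik k) ∧
      (∀ k, t k 0 = a) ∧ (∀ k, t k (ik k) = b) ∧
      (∀ k, ∀ i < ik k, t k i < t k (i + 1)) ∧
      (∀ ε > (0:ℝ), ∃ K : ℕ, ∀ k ≥ K, ∀ i < ik k, t k (i + 1) - t k i < ε) ∧
      Tendsto
        (fun k => ∑ i ∈ Finset.range (ik k),
          ∫ s in Set.Ioc (t k i) (t k (i + 1)), ‖f (t k (i + 1)) - f s‖)
        atTop (𝓝 0) := by
  choose ik t hik ht0 htn ht_lt ht_mesh ht_defect using fun k : ℕ =>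
    exists_subdivision_rightTagDefect_lt hab hf (Nat.one_div_pos_of_nat (n := k))
  refine ⟨ik, t, hik, ht0, htn, ht_lt, fun ε hε => ?_, ?_⟩
  · obtain ⟨K, hK⟩ := exists_nat_one_div_lt hε
    exact ⟨K, fun k hk i hi => ((ht_mesh k i hi).trans_le (Nat.one_div_le_one_div hk)).trans hK⟩
  · exact squeeze_zero
      (fun k => Finset.sum_nonneg fun i _ => integral_nonneg fun s => norm_nonneg _)
      (fun k => (ht_defect k).le) tendsto_one_div_add_atTop_nhds_zero_nat

/-- **Approximation by Riemann sums (Lemma on subdivisions).**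
If `f : [a,b] → X` is Bochner integrable with values in a Banach space `X`, there is a
sequence of subdivisions `a = t_k^0 < t_k^1 < ⋯ < t_k^{i_k} = b` of `[a,b]`, with mesh
tending to `0`, such that `∑_{i=1}^{i_k} ∫_{t_k^{i-1}}^{t_k^i} ‖f(t_k^i) - f(t)‖ dt → 0`. -/
theorem stmt0 {X : Type*} [NormedAddCommGroup X] [NormedSpace ℝ X] [CompleteSpace X]
    (a b : ℝ) (hab : a < b) (f : ℝ → X)
    (hf : IntegrableOn f (Set.Icc a b) volume) :
    ∃ (ik : ℕ → ℕ) (t : ℕ → ℕ → ℝ),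
      (∀ k, 1 ≤ ik k) ∧
      (∀ k, t k 0 = a) ∧ (∀ k, t k (ik k) = b) ∧
      (∀ k, ∀ i < ik k, t k i < t k (i + 1)) ∧
      (∀ ε > (0:ℝ), ∃ K : ℕ, ∀ k ≥ K, ∀ i < ik k, t k (i + 1) - t k i < ε) ∧
      Tendsto
        (fun k => ∑ i ∈ Finset.range (ik k),
          ∫ s in Set.Ioc (t k i) (t k (i + 1)), ‖f (t k (i + 1)) - f s‖)
        atTop (𝓝 0) :=
  stmt0_general a b hab f hf
end

section
/- Let [a,b] be a closed bounded interval, X a Banach space, and f : [a,b] → X Bochner integrable. Then there exists a sequence of subdivisions (t_k^i)_{0 ≤ i ≤ i_k} of [a,b] with mesh tending to 0 such that ∑_{i=1}^{i_k} ‖(t_k^i - t_k^{i-1}) f(t_k^i) - ∫_{t_k^{i-1}}^{t_k^i} f(t) dt‖ → 0, and in particular the Riemann sums ∑_{i=1}^{i_k} (t_k^i - t_k^{i-1}) f(t_k^i) converge strongly in X to ∫_a^b f(t) dt. -/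
/-!
Extend `f` by zero to an integrable `F` on `ℝ`. For a step `ℓ = (b - a) / m` and a shift
`h ∈ (0, ℓ)` use the subdivision `a < a + h < a + h + ℓ < ⋯ < a + h + (m - 1) ℓ < b`.
The defect `‖(y - s) f(y) - ∫_s^y f‖` of a subinterval `(s, y]` of length at most `ℓ` is at
most `∫_0^ℓ ‖F y - F (y - u)‖ du`. As `h` runs over `(0, ℓ)`, the sample points `a + h + i ℓ`
sweep disjoint intervals, so by Tonelli the mean over `h` of the total defect of the first `m`
intervals is at most the mean over `u ∈ [0, ℓ)` of `‖F - F (· - u)‖_{L¹}`, which tends to `0`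
with `ℓ` by continuity of translations in `L¹`; pick a shift `h` doing no worse than the mean.
The last interval, sampled at `b`, contributes at most `∫_0^ℓ ‖f b - F (b - u)‖ du → 0`.
-/

open MeasureTheory Set Filter Topology
open scoped ENNReal

section

variable {X : Type*} [NormedAddCommGroup X]

theorem tendsto_lintegral_enorm_sub_comp_sub {F : ℝ → X} (hF : Integrable F) :
    Tendsto (fun u => ∫⁻ y, ‖F y - F (y - u)‖ₑ) (𝓝 0) (𝓝 0) := by
  let τ : ℝ → C(ℝ, ℝ) := fun u => ⟨fun y => y - u, by fun_prop⟩
  have hτ (u : ℝ) : MeasurePreserving (τ u) := measurePreserving_sub_right volume u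
  have hτc : Continuous τ := by
    apply ContinuousMap.continuous_of_continuous_uncurry
    simp only [τ, ContinuousMap.coe_mk]
    fun_prop
  let F₁ := hF.toL1 F
  have hlim : Tendsto (fun u => Lp.compMeasurePreserving (τ u) (hτ u) F₁) (𝓝 0)
      (𝓝 (Lp.compMeasurePreserving (τ 0) (hτ 0) F₁)) :=
    tendsto_const_nhds.compMeasurePreservingLp (hτc.tendsto 0) hτ (hτ 0) ENNReal.one_ne_top
  have h0 : Lp.compMeasurePreserving (τ 0) (hτ 0) F₁ = F₁ := by
    ext1
    filter_upwards [Lp.coeFn_compMeasurePreserving F₁ (hτ 0)] with y hy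
    rw [hy]
    simp [τ]
  rw [h0, tendsto_iff_edist_tendsto_0] at hlim
  refine hlim.congr fun u => ?_
  rw [edist_comm, Lp.edist_def, eLpNorm_one_eq_lintegral_enorm]
  apply lintegral_congr_ae
  have hF₁ : ⇑F₁ =ᵐ[volume] F := hF.coeFn_toL1
  filter_upwards [hF₁, Lp.coeFn_compMeasurePreserving F₁ (hτ u),
    (hτ u).quasiMeasurePreserving.ae_eq_comp hF₁] with y h1 h2 h3
  simp_all [τ]

theorem aemeasurable_enorm_sub_comp_sub {F : ℝ → X} (hF : AEStronglyMeasurable F)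
    (ν : Measure ℝ) [SFinite ν] (hν : ν ≪ volume) :
    AEMeasurable (fun p : ℝ × ℝ => ‖F p.1 - F (p.1 - p.2)‖ₑ) (volume.prod ν) := by
  have h1 : AEStronglyMeasurable (fun p : ℝ × ℝ => F p.1) (volume.prod ν) :=
    hF.comp_quasiMeasurePreserving Measure.quasiMeasurePreserving_fst
  have h2 : AEStronglyMeasurable (fun p : ℝ × ℝ => F (p.1 - p.2)) (volume.prod ν) :=
    hF.comp_quasiMeasurePreserving
      ((quasiMeasurePreserving_sub volume volume).mono_left
        ((Measure.AbsolutelyContinuous.refl _).prod hν))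
  exact (h1.sub h2).enorm

theorem setLIntegral_Ioc_eq_setLIntegral_Ico_sub (φ : ℝ → ℝ≥0∞) (y ℓ : ℝ) :
    ∫⁻ s in Ioc (y - ℓ) y, φ s = ∫⁻ u in Ico 0 ℓ, φ (y - u) := by
  rw [← (Measure.measurePreserving_sub_left volume y).setLIntegral_comp_preimage_emb
    (Homeomorph.subLeft y).measurableEmbedding, preimage_const_sub_Ioc, sub_self, sub_sub_cancel]

theorem AEMeasurable.comp_const_add_add {β : Type*} [MeasurableSpace β] {Φ : ℝ → β}
    (hΦ : AEMeasurable Φ) (a c : ℝ) : AEMeasurable (fun h => Φ (a + h + c)) :=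
  hΦ.comp_quasiMeasurePreserving
    ((measurePreserving_add_right volume c).comp
      (measurePreserving_add_left volume a)).quasiMeasurePreserving

theorem setLIntegral_Ioo_sum_comp_add_le {Φ : ℝ → ℝ≥0∞} (hΦ : AEMeasurable Φ) (a ℓ : ℝ)
    (m : ℕ) : ∫⁻ h in Ioo 0 ℓ, ∑ i ∈ Finset.range m, Φ (a + h + i * ℓ) ≤ ∫⁻ y, Φ y := by
  rcases le_or_gt ℓ 0 with hℓ | hℓ
  · simp [Ioo_eq_empty_of_le hℓ]
  let I : ℕ → Set ℝ := fun i => Ioo (a + i * ℓ) (a + (i + 1 : ℕ) * ℓ)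
  have hshift (i : ℕ) : ∫⁻ h in Ioo 0 ℓ, Φ (a + h + i * ℓ) = ∫⁻ y in I i, Φ y := by
    have hpre : (fun h => h + (a + i * ℓ)) ⁻¹' I i = Ioo 0 ℓ := by
      simp only [I, preimage_add_const_Ioo]
      congr 1 <;> push_cast <;> ring
    have := (measurePreserving_add_right volume (a + i * ℓ)).setLIntegral_comp_preimage_emb
      (Homeomorph.addRight _).measurableEmbedding Φ (I i)
    rw [← this, hpre]
    congr! 3 with h
    ring
  have hmono : Monotone fun i : ℕ => a + i * ℓ := fun i j hij =>
    add_le_add_right (mul_le_mul_of_nonneg_right (Nat.cast_le.2 hij) hℓ.le) a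
  have hdisj : PairwiseDisjoint (↑(Finset.range m)) I :=
    (hmono.pairwise_disjoint_on_Ioo_succ).set_pairwise _
  calc ∫⁻ h in Ioo 0 ℓ, ∑ i ∈ Finset.range m, Φ (a + h + i * ℓ)
      = ∑ i ∈ Finset.range m, ∫⁻ y in I i, Φ y := by
        rw [lintegral_finsetSum' _ fun i _ => ?_]
        · exact Finset.sum_congr rfl fun i _ => hshift i
        exact (hΦ.comp_const_add_add a _).restrict
    _ = ∫⁻ y in ⋃ i ∈ Finset.range m, I i, Φ y :=
        (lintegral_biUnion_finset hdisj (fun _ _ => measurableSet_Ioo) _).symm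
    _ ≤ ∫⁻ y, Φ y := setLIntegral_le_lintegral _ _

theorem tendsto_setLAverage_Ico_nhdsGT_zero {τ : ℝ → ℝ≥0∞} (hτ : Tendsto τ (𝓝 0) (𝓝 0)) :
    Tendsto (fun ℓ => ⨍⁻ u in Ico 0 ℓ, τ u ∂volume) (𝓝[>] 0) (𝓝 0) := by
  rw [ENNReal.tendsto_nhds_zero] at hτ ⊢
  intro ε hε
  obtain ⟨δ, hδ, hτδ⟩ := Metric.eventually_nhds_iff.1 (hτ ε hε)
  filter_upwards [Ioo_mem_nhdsGT hδ] with ℓ hℓ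
  have hvol : volume (Ico 0 ℓ) ≠ 0 := by simp [Real.volume_Ico, hℓ.1]
  calc ⨍⁻ u in Ico 0 ℓ, τ u ∂volume ≤ ⨍⁻ _ in Ico 0 ℓ, ε ∂volume := by
        refine laverage_mono_ae ((ae_restrict_iff' measurableSet_Ico).2
          (Eventually.of_forall fun u hu => hτδ ?_))
        rw [Real.dist_0_eq_abs, abs_of_nonneg hu.1]
        exact hu.2.trans hℓ.2
    _ = ε := setLAverage_const hvol measure_Ico_lt_top.ne ε

noncomputable def leftDeviation (F : ℝ → X) (ℓ y : ℝ) : ℝ≥0∞ :=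
  ∫⁻ u in Ico 0 ℓ, ‖F y - F (y - u)‖ₑ

theorem aemeasurable_leftDeviation {F : ℝ → X}
    (hF : AEStronglyMeasurable F) (ℓ : ℝ) : AEMeasurable (leftDeviation F ℓ) :=
  (aemeasurable_enorm_sub_comp_sub hF _ Measure.restrict_le_self.absolutelyContinuous
    ).lintegral_prod_right'

theorem lintegral_leftDeviation {F : ℝ → X} (hF : AEStronglyMeasurable F) (ℓ : ℝ) :
    ∫⁻ y, leftDeviation F ℓ y = ∫⁻ u in Ico 0 ℓ, ∫⁻ y, ‖F y - F (y - u)‖ₑ :=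
  lintegral_lintegral_swap
    (aemeasurable_enorm_sub_comp_sub hF _ Measure.restrict_le_self.absolutelyContinuous)

theorem tendsto_leftDeviation {F : ℝ → X} (hF : Integrable F) (y : ℝ) :
    Tendsto (fun ℓ => leftDeviation F ℓ y) (𝓝 0) (𝓝 0) := by
  have hvol : Tendsto (fun ℓ : ℝ => volume (Ico 0 ℓ)) (𝓝 0) (𝓝 0) := by
    simpa [Real.volume_Ico] using (ENNReal.continuous_ofReal.tendsto 0)
  have hfin : ∫⁻ u, ‖F (y - u)‖ₑ ≠ ∞ := by
    rw [(Measure.measurePreserving_sub_left volume y).lintegral_comp_emb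
      (Homeomorph.subLeft y).measurableEmbedding (fun x => ‖F x‖ₑ)]
    exact hF.2.ne
  have hbound (ℓ : ℝ) : leftDeviation F ℓ y
      ≤ ‖F y‖ₑ * volume (Ico 0 ℓ) + ∫⁻ u in Ico 0 ℓ, ‖F (y - u)‖ₑ := by
    rw [← setLIntegral_const, ← lintegral_add_left measurable_const]
    exact lintegral_mono fun u => enorm_sub_le
  have hlim := (ENNReal.Tendsto.const_mul (a := ‖F y‖ₑ) hvol (Or.inr enorm_ne_top)).add
    (tendsto_setLIntegral_zero hfin hvol)
  rw [mul_zero, zero_add] at hlim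
  exact tendsto_of_tendsto_of_tendsto_of_le_of_le tendsto_const_nhds hlim
    (fun _ => zero_le) hbound

theorem exists_mem_Ioo_sum_leftDeviation_le {F : ℝ → X} (hF : AEStronglyMeasurable F)
    (a : ℝ) {ℓ : ℝ} (hℓ : 0 < ℓ) (m : ℕ) :
    ∃ h ∈ Ioo 0 ℓ, ∑ i ∈ Finset.range m, leftDeviation F ℓ (a + h + i * ℓ)
      ≤ ⨍⁻ u in Ico 0 ℓ, (∫⁻ y, ‖F y - F (y - u)‖ₑ) ∂volume := by
  set G : ℝ → ℝ≥0∞ := fun h => ∑ i ∈ Finset.range m, leftDeviation F ℓ (a + h + i * ℓ)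
  have hG : AEMeasurable G (volume.restrict (Ioo 0 ℓ)) :=
    Finset.aemeasurable_fun_sum _ fun i _ =>
      ((aemeasurable_leftDeviation hF ℓ).comp_const_add_add a _).restrict
  have hvol : volume (Ioo 0 ℓ) ≠ 0 := by simp [Real.volume_Ioo, hℓ]
  obtain ⟨h, hmem, hle⟩ := nonempty_of_measure_ne_zero
    (measure_le_setLAverage_pos hvol measure_Ioo_lt_top.ne hG).ne'
  refine ⟨h, hmem, hle.trans ?_⟩
  rw [setLAverage_eq, setLAverage_eq, Real.volume_Ioo, Real.volume_Ico,
    ← lintegral_leftDeviation hF]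
  exact ENNReal.div_le_div_right
    (setLIntegral_Ioo_sum_comp_add_le (aemeasurable_leftDeviation hF ℓ) a ℓ m) _

/-- The progression `a + h + (j - 1) ℓ` clamped to `[a, b]`: when `a + m ℓ = b` and `0 < h < ℓ`,
its first `m + 2` terms are `a < a + h < ⋯ < a + h + (m - 1) ℓ < b`. -/
noncomputable def shiftedGrid (a b ℓ h : ℝ) (j : ℕ) : ℝ :=
  max a (min b (a + h + ((j : ℝ) - 1) * ℓ))

section shiftedGrid

variable {a b ℓ h : ℝ} {m : ℕ}

theorem shiftedGrid_mem_Icc (hab : a ≤ b) (j : ℕ) : shiftedGrid a b ℓ h j ∈ Icc a b :=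
  ⟨le_max_left _ _, max_le hab (min_le_left _ _)⟩

theorem shiftedGrid_monotone (hℓ : 0 ≤ ℓ) : Monotone (shiftedGrid a b ℓ h) := fun i j hij => by
  unfold shiftedGrid
  gcongr

theorem shiftedGrid_succ_sub_le (hℓ : 0 ≤ ℓ) (j : ℕ) :
    shiftedGrid a b ℓ h (j + 1) - shiftedGrid a b ℓ h j ≤ ℓ := by
  unfold shiftedGrid
  push_cast
  grind

theorem shiftedGrid_zero (hhℓ : h ≤ ℓ) : shiftedGrid a b ℓ h 0 = a := by
  unfold shiftedGrid
  simp only [CharP.cast_eq_zero, zero_sub, neg_one_mul]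
  exact max_eq_left ((min_le_right _ _).trans (by linarith))

theorem shiftedGrid_succ (hb : a + m * ℓ = b) (hh : h ∈ Ioo 0 ℓ) {i : ℕ} (hi : i < m) :
    shiftedGrid a b ℓ h (i + 1) = a + h + i * ℓ := by
  have him : (i : ℝ) + 1 ≤ m := by exact_mod_cast hi
  unfold shiftedGrid
  push_cast
  rw [add_sub_cancel_right, min_eq_right, max_eq_right] <;> nlinarith [hh.1, hh.2]

theorem shiftedGrid_last (hab : a ≤ b) (hb : a + m * ℓ = b) (hh : 0 ≤ h) :
    shiftedGrid a b ℓ h (m + 1) = b := by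
  unfold shiftedGrid
  push_cast
  rw [add_sub_cancel_right, min_eq_left (by linarith), max_eq_right hab]

theorem shiftedGrid_lt_succ (hab : a < b) (hb : a + m * ℓ = b) (hh : h ∈ Ioo 0 ℓ) {i : ℕ}
    (hi : i < m + 1) : shiftedGrid a b ℓ h i < shiftedGrid a b ℓ h (i + 1) := by
  have him : (i : ℝ) ≤ m := by exact_mod_cast Nat.lt_succ_iff.1 hi
  have hxb : a + h + ((i : ℝ) - 1) * ℓ < b := by nlinarith [hh.1, hh.2]
  have hax : a < a + h + ((i + 1 : ℕ) - 1 : ℝ) * ℓ := by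
    push_cast; nlinarith [hh.1, hh.2]
  unfold shiftedGrid
  refine max_lt (lt_max_of_lt_right (lt_min hab hax)) (lt_max_of_lt_right ?_)
  rw [min_eq_right hxb.le]
  refine lt_min hxb ?_
  push_cast
  linarith [hh.1, hh.2]

end shiftedGrid

variable [NormedSpace ℝ X]

noncomputable def riemannDefect (f : ℝ → X) (s y : ℝ) : X :=
  (y - s) • f y - ∫ x in Ioc s y, f x

theorem sum_setIntegral_Ioc_eq_setIntegral_Icc {f : ℝ → X} {a b : ℝ}
    (hf : IntegrableOn f (Icc a b)) {t : ℕ → ℝ} (ht : Monotone t) {m : ℕ} (h0 : t 0 = a)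
    (hm : t m = b) :
    ∑ i ∈ Finset.range m, ∫ s in Ioc (t i) (t (i + 1)), f s = ∫ s in Icc a b, f s := by
  have hab : a ≤ b := h0 ▸ hm ▸ ht (Nat.zero_le m)
  have hpiece : ∀ i < m, IntervalIntegrable f volume (t i) (t (i + 1)) := fun i hi =>
    (hf.mono_set (uIcc_subset_Icc ⟨h0 ▸ ht (Nat.zero_le i), hm ▸ ht hi.le⟩
      ⟨h0 ▸ ht (Nat.zero_le _), hm ▸ ht hi⟩)).intervalIntegrable
  calc ∑ i ∈ Finset.range m, ∫ s in Ioc (t i) (t (i + 1)), f s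
      = ∑ i ∈ Finset.range m, ∫ s in t i..t (i + 1), f s :=
        Finset.sum_congr rfl fun i _ => (intervalIntegral.integral_of_le (ht i.le_succ)).symm
    _ = ∫ s in Icc a b, f s := by
        rw [intervalIntegral.sum_integral_adjacent_intervals hpiece, h0, hm,
          intervalIntegral.integral_of_le hab, integral_Icc_eq_integral_Ioc]

theorem norm_sum_smul_sub_setIntegral_Icc_le {f : ℝ → X} {a b : ℝ}
    (hf : IntegrableOn f (Icc a b)) {t : ℕ → ℝ} (ht : Monotone t) {m : ℕ} (h0 : t 0 = a)
    (hm : t m = b) :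
    ‖∑ i ∈ Finset.range m, (t (i + 1) - t i) • f (t (i + 1)) - ∫ s in Icc a b, f s‖
      ≤ ∑ i ∈ Finset.range m, ‖riemannDefect f (t i) (t (i + 1))‖ := by
  rw [← sum_setIntegral_Ioc_eq_setIntegral_Icc hf ht h0 hm, ← Finset.sum_sub_distrib]
  exact norm_sum_le _ _

variable [CompleteSpace X]

theorem enorm_measureReal_smul_sub_setIntegral_le {α : Type*} [MeasurableSpace α]
    {μ : Measure α} {s : Set α} (hs : μ s ≠ ∞) {F : α → X} (hF : IntegrableOn F s μ) (c : X) :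
    ‖μ.real s • c - ∫ x in s, F x ∂μ‖ₑ ≤ ∫⁻ x in s, ‖c - F x‖ₑ ∂μ := by
  have hc : IntegrableOn (fun _ => c) s μ := integrableOn_const hs
  rw [← setIntegral_const, ← integral_sub hc hF]
  exact enorm_integral_le_lintegral_enorm _

theorem enorm_riemannDefect_le_leftDeviation {f : ℝ → X} {a b : ℝ}
    (hf : IntegrableOn f (Icc a b)) {s y ℓ : ℝ} (has : a ≤ s) (hsy : s ≤ y) (hyb : y ≤ b)
    (hℓ : y - ℓ ≤ s) : ‖riemannDefect f s y‖ₑ ≤ leftDeviation ((Icc a b).indicator f) ℓ y := by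
  have hsub : Ioc s y ⊆ Icc a b := fun x hx => ⟨has.trans hx.1.le, hx.2.trans hyb⟩
  have hy : y ∈ Icc a b := ⟨has.trans hsy, hyb⟩
  calc ‖riemannDefect f s y‖ₑ ≤ ∫⁻ x in Ioc s y, ‖f y - f x‖ₑ := by
        simpa only [riemannDefect, Real.volume_real_Ioc_of_le hsy] using
          enorm_measureReal_smul_sub_setIntegral_le measure_Ioc_lt_top.ne (hf.mono_set hsub) (f y)
    _ = ∫⁻ x in Ioc s y, ‖(Icc a b).indicator f y - (Icc a b).indicator f x‖ₑ :=
        setLIntegral_congr_fun measurableSet_Ioc fun x hx => by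
          rw [indicator_of_mem hy, indicator_of_mem (hsub hx)]
    _ ≤ ∫⁻ x in Ioc (y - ℓ) y, ‖(Icc a b).indicator f y - (Icc a b).indicator f x‖ₑ :=
        lintegral_mono_set (Ioc_subset_Ioc_left hℓ)
    _ = leftDeviation ((Icc a b).indicator f) ℓ y := setLIntegral_Ioc_eq_setLIntegral_Ico_sub _ y ℓ

theorem sum_enorm_riemannDefect_shiftedGrid_le {f : ℝ → X} {a b ℓ h : ℝ} {m : ℕ}
    (hf : IntegrableOn f (Icc a b)) (hab : a ≤ b) (hb : a + m * ℓ = b) (hh : h ∈ Ioo 0 ℓ) :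
    ∑ i ∈ Finset.range (m + 1),
        ‖riemannDefect f (shiftedGrid a b ℓ h i) (shiftedGrid a b ℓ h (i + 1))‖ₑ
      ≤ ∑ i ∈ Finset.range m, leftDeviation ((Icc a b).indicator f) ℓ (a + h + i * ℓ)
        + leftDeviation ((Icc a b).indicator f) ℓ b := by
  have hℓ : 0 ≤ ℓ := hh.1.le.trans hh.2.le
  have hterm (j : ℕ) : ‖riemannDefect f (shiftedGrid a b ℓ h j) (shiftedGrid a b ℓ h (j + 1))‖ₑ
      ≤ leftDeviation ((Icc a b).indicator f) ℓ (shiftedGrid a b ℓ h (j + 1)) :=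
    enorm_riemannDefect_le_leftDeviation hf (shiftedGrid_mem_Icc hab j).1
      (shiftedGrid_monotone hℓ j.le_succ) (shiftedGrid_mem_Icc hab _).2
      (by linarith [shiftedGrid_succ_sub_le (a := a) (b := b) (h := h) hℓ j])
  rw [Finset.sum_range_succ]
  refine add_le_add (Finset.sum_le_sum fun i hi => ?_) ?_
  · simpa only [shiftedGrid_succ hb hh (Finset.mem_range.1 hi)] using hterm i
  · simpa only [shiftedGrid_last hab hb hh.1.le] using hterm m

theorem exists_shifts_tendsto_sum_enorm_riemannDefect {f : ℝ → X} {a b : ℝ} {ℓ : ℕ → ℝ}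
    {m : ℕ → ℕ} (hf : IntegrableOn f (Icc a b)) (hℓ : ∀ n, 0 < ℓ n)
    (hb : ∀ n, a + m n * ℓ n = b) (hℓ0 : Tendsto ℓ atTop (𝓝 0)) :
    ∃ h : ℕ → ℝ, (∀ n, h n ∈ Ioo 0 (ℓ n)) ∧
      Tendsto (fun n => ∑ i ∈ Finset.range (m n + 1),
        ‖riemannDefect f (shiftedGrid a b (ℓ n) (h n) i) (shiftedGrid a b (ℓ n) (h n) (i + 1))‖ₑ)
        atTop (𝓝 0) := by
  have hab : a ≤ b := hb 0 ▸ le_add_of_nonneg_right (by positivity [hℓ 0])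
  set F := (Icc a b).indicator f
  have hF : Integrable F := (integrable_indicator_iff measurableSet_Icc).2 hf
  choose h hh hG using fun n => exists_mem_Ioo_sum_leftDeviation_le hF.1 a (hℓ n) (m n)
  refine ⟨h, hh, ?_⟩
  have hlim := ((tendsto_setLAverage_Ico_nhdsGT_zero (tendsto_lintegral_enorm_sub_comp_sub hF)).comp
    (tendsto_nhdsWithin_of_tendsto_nhds_of_eventually_within _ hℓ0 (Eventually.of_forall hℓ))).add
    ((tendsto_leftDeviation hF b).comp hℓ0)
  rw [zero_add] at hlim
  exact tendsto_of_tendsto_of_tendsto_of_le_of_le tendsto_const_nhds hlim (fun _ => zero_le)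
    fun n => (sum_enorm_riemannDefect_shiftedGrid_le hf hab (hb n) (hh n)).trans
      (add_le_add (hG n) le_rfl)

end

/-- **Approximation of Bochner integrals by Riemann sums.**
If `f : [a,b] → X` is Bochner integrable with values in a Banach space `X`, there is a
sequence of subdivisions of `[a,b]` with mesh tending to `0` such that
`∑_i ‖(t_k^i - t_k^{i-1}) f(t_k^i) - ∫_{t_k^{i-1}}^{t_k^i} f(t) dt‖ → 0`; in particular the
right-endpoint Riemann sums converge strongly in `X` to `∫_a^b f(t) dt`. -/
theorem stmt1 {X : Type*} [NormedAddCommGroup X] [NormedSpace ℝ X] [CompleteSpace X]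
    (a b : ℝ) (hab : a < b) (f : ℝ → X)
    (hf : IntegrableOn f (Set.Icc a b) volume) :
    ∃ (ik : ℕ → ℕ) (t : ℕ → ℕ → ℝ),
      (∀ k, 1 ≤ ik k) ∧
      (∀ k, t k 0 = a) ∧ (∀ k, t k (ik k) = b) ∧
      (∀ k, ∀ i < ik k, t k i < t k (i + 1)) ∧
      (∀ ε > (0:ℝ), ∃ K : ℕ, ∀ k ≥ K, ∀ i < ik k, t k (i + 1) - t k i < ε) ∧
      Tendsto
        (fun k => ∑ i ∈ Finset.range (ik k),
          ‖(t k (i + 1) - t k i) • f (t k (i + 1)) -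
            ∫ s in Set.Ioc (t k i) (t k (i + 1)), f s‖)
        atTop (𝓝 0) ∧
      Tendsto
        (fun k => ∑ i ∈ Finset.range (ik k), (t k (i + 1) - t k i) • f (t k (i + 1)))
        atTop (𝓝 (∫ s in Set.Icc a b, f s)) := by
  set ℓ : ℕ → ℝ := fun n => (b - a) / (n + 1 : ℕ)
  have hℓ (n : ℕ) : 0 < ℓ n := div_pos (sub_pos.2 hab) (Nat.cast_pos.2 n.succ_pos)
  have hb (n : ℕ) : a + ((n + 1 : ℕ) : ℝ) * ℓ n = b := by
    rw [mul_div_cancel₀ _ (Nat.cast_ne_zero.2 n.succ_ne_zero), add_sub_cancel]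
  have hℓ0 : Tendsto ℓ atTop (𝓝 0) :=
    (tendsto_const_div_atTop_nhds_zero_nat (b - a)).comp (tendsto_add_atTop_nat 1)
  obtain ⟨h, hh, herr⟩ := exists_shifts_tendsto_sum_enorm_riemannDefect hf hℓ hb hℓ0
  set t : ℕ → ℕ → ℝ := fun n => shiftedGrid a b (ℓ n) (h n)
  have herr' : Tendsto (fun n => ∑ i ∈ Finset.range (n + 2),
      ‖riemannDefect f (t n i) (t n (i + 1))‖) atTop (𝓝 0) := by
    simpa [Function.comp_def, ENNReal.toReal_sum] using
      (ENNReal.tendsto_toReal ENNReal.zero_ne_top).comp herr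
  refine ⟨fun n => n + 2, t, fun _ => by simp, fun n => shiftedGrid_zero (hh n).2.le,
    fun n => shiftedGrid_last hab.le (hb n) (hh n).1.le,
    fun n i hi => shiftedGrid_lt_succ hab (hb n) (hh n) hi, fun ε hε => ?_, herr', ?_⟩
  · obtain ⟨K, hK⟩ := eventually_atTop.1 (hℓ0.eventually (gt_mem_nhds hε))
    exact ⟨K, fun k hk i _ => (shiftedGrid_succ_sub_le (hℓ k).le i).trans_lt (hK k hk)⟩
  · rw [tendsto_iff_norm_sub_tendsto_zero]
    exact squeeze_zero (fun _ => norm_nonneg _) (fun n => norm_sum_smul_sub_setIntegral_Icc_le hf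
      (shiftedGrid_monotone (hℓ n).le) (shiftedGrid_zero (hh n).2.le)
      (shiftedGrid_last hab.le (hb n) (hh n).1.le)) herr'
end

section
/- Let (X, 𝒜, μ) be a finite measure space, p > 1, and H : X × ℝⁿ → ℝᵐ a Carathéodory function satisfying |H(x,ξ)| ≤ a|ξ|^{p-1} + b(x) for some constant a ≥ 0 and nonnegative b ∈ L^{p'}(X) with p' = p/(p-1). Let Φ_k be a bounded sequence in L^p(X;ℝⁿ) and Ψ_k a sequence converging to 0 strongly in L^p(X;ℝⁿ). Then for every Φ ∈ L^p(X;ℝᵐ), ∫_X [H(x, Φ_k(x)+Ψ_k(x)) - H(x, Φ_k(x))] · Φ(x) dμ(x) → 0 as k → ∞. -/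
/-!
Write `G k x = H x (Φk k x + Ψk k x) - H x (Φk k x)`. The growth condition bounds `G k` in
`L^{p'}` uniformly in `k`, so by Hölder the integrands `⟪G k, Φ⟫` are uniformly integrable, and
by Vitali's theorem it suffices that `G k → 0` in measure.

Chebyshev keeps `Φk k x` in a fixed ball of radius `M`, outside a set of small measure uniformly
in `k`, and `Ψk k x` in a ball of radius `r`, outside a set whose measure tends to `0`. On the
ball of radius `M` each `H x` is uniformly continuous, so the set of `x` where `H x` oscillates
by more than `ε` at scale `r` shrinks to the empty set as `r → 0`; it is measurable because
continuity lets the oscillation be tested on a countable dense set.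
-/

open MeasureTheory Set Filter Topology
open scoped ENNReal NNReal

abbrev Eucl (n : ℕ) : Type := EuclideanSpace ℝ (Fin n)

section InMeasure

variable {ι α E F G : Type*} [MeasurableSpace α] {μ : Measure α}

def BoundedInMeasure [Norm E] (μ : Measure α) (u : ι → α → E) : Prop :=
  Tendsto (fun M : ℝ => ⨆ i, μ {x | M ≤ ‖u i x‖}) atTop (𝓝 0)

theorem BoundedInMeasure.eventually_forall_le [Norm E] {u : ι → α → E}
    (hu : BoundedInMeasure μ u) {δ : ℝ≥0∞} (hδ : 0 < δ) :
    ∀ᶠ M in atTop, ∀ i, μ {x | M ≤ ‖u i x‖} ≤ δ :=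
  (ENNReal.tendsto_nhds_zero.1 hu δ hδ).mono fun _ hM => iSup_le_iff.1 hM

theorem boundedInMeasure_of_eLpNorm_le [NormedAddCommGroup E] {p : ℝ≥0∞} (hp0 : p ≠ 0)
    (hp : p ≠ ∞) {u : ι → α → E} (hu : ∀ i, AEStronglyMeasurable (u i) μ) {C : ℝ≥0∞} (hC : C ≠ ∞)
    (huC : ∀ i, eLpNorm (u i) p μ ≤ C) : BoundedInMeasure μ u := by
  lift C to ℝ≥0 using hC
  have hpos : 0 < p.toReal := ENNReal.toReal_pos hp0 hp
  have hbound : Tendsto (fun M : ℝ => (ENNReal.ofReal M)⁻¹ ^ p.toReal * (C : ℝ≥0∞) ^ p.toReal)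
      atTop (𝓝 0) := by
    have hinv : Tendsto (fun M : ℝ => (ENNReal.ofReal M)⁻¹) atTop (𝓝 0) := by
      simpa using tendsto_inv_iff.2 ENNReal.tendsto_ofReal_atTop
    simpa [ENNReal.zero_rpow_of_pos hpos] using
      ENNReal.Tendsto.mul_const (hinv.ennrpow_const p.toReal) (.inr (by simp))
  refine tendsto_of_tendsto_of_tendsto_of_le_of_le' tendsto_const_nhds hbound
    (.of_forall fun _ => zero_le) ((eventually_gt_atTop 0).mono fun M hM => iSup_le fun i => ?_)
  have hset : {x | M ≤ ‖u i x‖} = {x | ENNReal.ofReal M ≤ ‖u i x‖ₑ} := by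
    ext x
    simp [← ofReal_norm, ENNReal.ofReal_le_ofReal_iff (norm_nonneg _)]
  rw [hset]
  calc _ ≤ (ENNReal.ofReal M)⁻¹ ^ p.toReal * eLpNorm (u i) p μ ^ p.toReal :=
        meas_ge_le_mul_pow_eLpNorm_enorm μ hp0 hp (hu i) (by simpa using hM) (by simp)
    _ ≤ _ := by gcongr; exact huC i

theorem MeasureTheory.TendstoInMeasure.of_norm_le_mul [SeminormedAddCommGroup E]
    [SeminormedAddCommGroup F] [Norm G] {l : Filter ι} {f : ι → α → E} {g : ι → α → F}
    {c : ι → α → G}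
    (hg : TendstoInMeasure μ g l 0) (hc : BoundedInMeasure μ c)
    (hf : ∀ i x, ‖f i x‖ ≤ ‖g i x‖ * ‖c i x‖) : TendstoInMeasure μ f l 0 := by
  rw [tendstoInMeasure_iff_norm] at hg ⊢
  intro ε hε
  refine ENNReal.tendsto_nhds_zero.2 fun δ hδ => ?_
  obtain ⟨M, hM, hMpos⟩ :=
    ((hc.eventually_forall_le (ENNReal.half_pos hδ.ne')).and (eventually_gt_atTop 0)).exists
  filter_upwards [ENNReal.tendsto_nhds_zero.1 (hg (ε / M) (div_pos hε hMpos)) (δ / 2)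
    (ENNReal.half_pos hδ.ne')] with i hi
  have hsub : {x | ε ≤ ‖f i x - (0 : α → E) x‖} ⊆
      {x | M ≤ ‖c i x‖} ∪ {x | ε / M ≤ ‖g i x - (0 : α → F) x‖} := by
    intro x hx
    simp only [mem_union, mem_ofPred_eq, Pi.zero_apply, sub_zero] at hx ⊢
    by_contra! h
    have : ‖f i x‖ < ε :=
      calc ‖f i x‖ ≤ ‖g i x‖ * ‖c i x‖ := hf i x
        _ ≤ ‖g i x‖ * M := by gcongr; exact h.1.le
        _ < ε / M * M := by gcongr; exact h.2
        _ = ε := div_mul_cancel₀ ε hMpos.ne'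
    exact this.not_ge hx
  calc _ ≤ _ := measure_mono hsub
    _ ≤ δ / 2 + δ / 2 := (measure_union_le _ _).trans (add_le_add (hM i) hi)
    _ = δ := ENNReal.add_halves δ

end InMeasure

section Caratheodory

variable {ι α Z : Type*} [MeasurableSpace α]

theorem measurableSet_setOf_exists_mem_lt [TopologicalSpace Z] [TopologicalSpace.SeparableSpace Z]
    {g : α → Z → ℝ} (hmeas : ∀ z, Measurable fun x => g x z) (hcont : ∀ x, Continuous (g x))
    {U : Set Z} (hU : IsOpen U) (c : ℝ) : MeasurableSet {x | ∃ z ∈ U, c < g x z} := by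
  obtain ⟨S, hSc, hSd⟩ := TopologicalSpace.exists_countable_dense Z
  have hS : {x | ∃ z ∈ U, c < g x z} = ⋃ z ∈ U ∩ S, {x | c < g x z} := by
    ext x
    simp only [mem_ofPred_eq, mem_iUnion, mem_inter_iff, exists_prop]
    refine ⟨fun ⟨z, hzU, hz⟩ => ?_, fun ⟨z, ⟨hzU, _⟩, hz⟩ => ⟨z, hzU, hz⟩⟩
    -- `c < g x ·` is open, so it meets the dense set `S` inside `U`
    obtain ⟨z', hz'S, hz'U, hz'⟩ :=
      hSd.exists_mem_open (hU.inter (isOpen_lt continuous_const (hcont x))) ⟨z, hzU, hz⟩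
    exact ⟨z', ⟨hz'U, hz'S⟩, hz'⟩
  rw [hS]
  exact .biUnion (hSc.mono inter_subset_right) fun z _ =>
    measurableSet_lt measurable_const (hmeas z)

variable {E F : Type*} [NormedAddCommGroup E] [NormedAddCommGroup F]

theorem Continuous.exists_pos_forall_norm_add_sub_lt [ProperSpace E] {f : E → F}
    (hf : Continuous f) (M : ℝ) {ε : ℝ} (hε : 0 < ε) :
    ∃ r > 0, ∀ ξ η : E, ‖ξ‖ ≤ M → ‖η‖ < r → ‖f (ξ + η) - f ξ‖ < ε := by
  have hU := (isCompact_closedBall (0 : E) M).uniformContinuousAt_of_continuousAt f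
    (fun ξ _ => hf.continuousAt) (Metric.dist_mem_uniformity hε)
  obtain ⟨r, hr, hrU⟩ := Metric.mem_uniformity_dist.1 hU
  refine ⟨r, hr, fun ξ η hξ hη => ?_⟩
  have := hrU (a := ξ) (b := ξ + η) (by simpa [dist_eq_norm] using hη) (by simpa using hξ)
  simpa [dist_eq_norm, norm_sub_rev] using this

variable [MeasurableSpace F] [BorelSpace F] [SecondCountableTopology F] [ProperSpace E]
  {μ : Measure α} {H : α → E → F}

theorem tendsto_measure_setOf_exists_norm_add_sub_gt [IsFiniteMeasure μ]
    (hmeas : ∀ ξ, Measurable fun x => H x ξ) (hcont : ∀ x, Continuous (H x)) (M : ℝ) {ε : ℝ}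
    (hε : 0 < ε) :
    Tendsto (fun j : ℕ => μ {x | ∃ ξ η : E, ‖ξ‖ < M ∧ ‖η‖ < 1 / ((j : ℝ) + 1) ∧
      ε < ‖H x (ξ + η) - H x ξ‖}) atTop (𝓝 0) := by
  set S : ℕ → Set α := fun j => {x | ∃ ξ η : E, ‖ξ‖ < M ∧ ‖η‖ < 1 / ((j : ℝ) + 1) ∧
      ε < ‖H x (ξ + η) - H x ξ‖}
  have hSmeas : ∀ j, MeasurableSet (S j) := fun j => by
    convert measurableSet_setOf_exists_mem_lt
      (g := fun x (z : E × E) => ‖H x (z.1 + z.2) - H x z.1‖)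
      (U := {z | ‖z.1‖ < M ∧ ‖z.2‖ < 1 / ((j : ℝ) + 1)}) (fun z => ((hmeas _).sub (hmeas _)).norm)
      (fun x => by fun_prop) ((isOpen_lt continuous_fst.norm continuous_const).inter
        (isOpen_lt continuous_snd.norm continuous_const)) ε using 1
    ext x
    simp [S, Prod.exists, and_assoc]
  have hSanti : Antitone S := fun j j' hjj' x ⟨ξ, η, hξ, hη, hx⟩ =>
    ⟨ξ, η, hξ, hη.trans_le (by gcongr), hx⟩
  have hSempty : ⋂ j, S j = ∅ := by
    refine eq_empty_of_forall_notMem fun x hx => ?_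
    obtain ⟨r, hr, hxr⟩ := (hcont x).exists_pos_forall_norm_add_sub_lt M hε
    obtain ⟨j, hj⟩ := exists_nat_one_div_lt hr
    obtain ⟨ξ, η, hξ, hη, hgt⟩ := mem_iInter.1 hx j
    exact (hxr ξ η hξ.le (hη.trans hj)).not_gt hgt
  have := tendsto_measure_iInter_atTop (μ := μ) (fun j => (hSmeas j).nullMeasurableSet) hSanti
    ⟨0, measure_ne_top μ _⟩
  rwa [hSempty, measure_empty] at this

theorem tendstoInMeasure_add_sub_of_boundedInMeasure [IsFiniteMeasure μ]
    (hmeas : ∀ ξ, Measurable fun x => H x ξ) (hcont : ∀ x, Continuous (H x))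
    {l : Filter ι} {u v : ι → α → E} (hu : BoundedInMeasure μ u)
    (hv : TendstoInMeasure μ v l 0) :
    TendstoInMeasure μ (fun i x => H x (u i x + v i x) - H x (u i x)) l 0 := by
  rw [tendstoInMeasure_iff_norm] at hv ⊢
  intro ε hε
  refine ENNReal.tendsto_nhds_zero.2 fun δ hδ => ?_
  have hδ3 : 0 < δ / 3 := ENNReal.div_pos hδ.ne' ENNReal.ofNat_ne_top
  obtain ⟨M, hM⟩ := (hu.eventually_forall_le hδ3).exists
  obtain ⟨j, hj⟩ := (ENNReal.tendsto_nhds_zero.1 (tendsto_measure_setOf_exists_norm_add_sub_gt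
    (μ := μ) hmeas hcont M (half_pos hε)) _ hδ3).exists
  filter_upwards [ENNReal.tendsto_nhds_zero.1 (hv (1 / ((j : ℝ) + 1)) (by positivity)) _ hδ3]
    with i hi
  have hsub : {x | ε ≤ ‖H x (u i x + v i x) - H x (u i x) - (0 : α → F) x‖} ⊆
      {x | M ≤ ‖u i x‖} ∪ {x | 1 / ((j : ℝ) + 1) ≤ ‖v i x - (0 : α → E) x‖} ∪
        {x | ∃ ξ η : E, ‖ξ‖ < M ∧ ‖η‖ < 1 / ((j : ℝ) + 1) ∧
          ε / 2 < ‖H x (ξ + η) - H x ξ‖} := by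
    intro x hx
    simp only [mem_union, mem_ofPred_eq, Pi.zero_apply, sub_zero] at hx ⊢
    by_contra! h
    linarith [h.2 (u i x) (v i x) h.1.1 h.1.2]
  calc _ ≤ _ := measure_mono hsub
    _ ≤ δ / 3 + δ / 3 + δ / 3 :=
      (measure_union_le _ _).trans (add_le_add ((measure_union_le _ _).trans
        (add_le_add (hM i) hi)) hj)
    _ = δ := ENNReal.add_thirds δ

theorem aestronglyMeasurable_caratheodory_comp [MeasurableSpace E] [BorelSpace E]
    (hmeas : ∀ ξ, Measurable fun x => H x ξ) (hcont : ∀ x, Continuous (H x))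
    {g : α → E} (hg : AEStronglyMeasurable g μ) :
    AEStronglyMeasurable (fun x => H x (g x)) μ :=
  ((measurable_uncurry_of_continuous_of_measurable (u := fun ξ x => H x ξ) hcont
    hmeas).comp_aemeasurable (hg.aemeasurable.prodMk aemeasurable_id)).aestronglyMeasurable

end Caratheodory

section Pairing

open scoped InnerProductSpace

variable {ι α F : Type*} [MeasurableSpace α] {μ : Measure α}
  [NormedAddCommGroup F] [InnerProductSpace ℝ F] {p q : ℝ≥0∞} [ENNReal.HolderConjugate q p]

theorem unifIntegrable_inner_of_eLpNorm_le (hp : p ≠ ∞) {G : ι → α → F}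
    (hG : ∀ i, AEStronglyMeasurable (G i) μ) {C : ℝ≥0∞} (hC : C ≠ ∞)
    (hGC : ∀ i, eLpNorm (G i) q μ ≤ C) {φ : α → F} (hφ : MemLp φ p μ) :
    UnifIntegrable (fun i x => ⟪G i x, φ x⟫_ℝ) 1 μ := by
  lift C to ℝ≥0 using hC
  intro ε hε
  obtain ⟨δ, hδ, hφδ⟩ := hφ.eLpNorm_indicator_le (ENNReal.HolderConjugate.one_le p q) hp
    (ε := ε / (C + 1)) (by positivity)
  refine ⟨δ, hδ, fun i s hs hμs => ?_⟩
  have hind : s.indicator (fun x => ⟪G i x, φ x⟫_ℝ) = fun x => ⟪G i x, s.indicator φ x⟫_ℝ := by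
    ext x
    by_cases hx : x ∈ s <;> simp [hx]
  calc eLpNorm (s.indicator fun x => ⟪G i x, φ x⟫_ℝ) 1 μ
      ≤ (1 : ℝ≥0) * eLpNorm (G i) q μ * eLpNorm (s.indicator φ) p μ := by
        rw [hind]
        exact eLpNorm_le_eLpNorm_mul_eLpNorm'_of_norm (hG i) (hφ.1.indicator hs)
          (fun u v => ⟪u, v⟫_ℝ) 1
          (.of_forall fun x => by simpa using norm_inner_le_norm (𝕜 := ℝ) _ _)
    _ ≤ C * ENNReal.ofReal (ε / (C + 1)) := by
        simpa using mul_le_mul' (hGC i) (hφδ s hs hμs)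
    _ ≤ ENNReal.ofReal ε := by
        rw [← ENNReal.ofReal_coe_nnreal, ← ENNReal.ofReal_mul C.coe_nonneg]
        gcongr
        rw [mul_div_assoc', div_le_iff₀ (by positivity)]
        nlinarith

theorem tendsto_integral_inner_of_tendstoInMeasure [IsFiniteMeasure μ] (hp : p ≠ ∞)
    {G : ℕ → α → F} (hG : ∀ k, AEStronglyMeasurable (G k) μ) {C : ℝ≥0∞}
    (hC : C ≠ ∞) (hGC : ∀ k, eLpNorm (G k) q μ ≤ C) (hG0 : TendstoInMeasure μ G atTop 0)
    {φ : α → F} (hφ : MemLp φ p μ) :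
    Tendsto (fun k => ∫ x, ⟪G k x, φ x⟫_ℝ ∂μ) atTop (𝓝 0) := by
  set f : ℕ → α → ℝ := fun k x => ⟪G k x, φ x⟫_ℝ
  have hf : ∀ k, AEStronglyMeasurable (f k) μ := fun k => (hG k).inner hφ.1
  have hφbdd : BoundedInMeasure μ fun _ : ℕ => φ :=
    boundedInMeasure_of_eLpNorm_le (ENNReal.HolderConjugate.ne_zero p q) hp (fun _ => hφ.1)
      hφ.2.ne fun _ => le_rfl
  have hf0 : TendstoInMeasure μ f atTop 0 :=
    TendstoInMeasure.of_norm_le_mul hG0 hφbdd fun k x => norm_inner_le_norm _ _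
  have hL1 : Tendsto (fun k => eLpNorm (f k - 0) 1 μ) atTop (𝓝 0) :=
    tendsto_Lp_finite_of_tendstoInMeasure le_rfl ENNReal.one_ne_top hf MemLp.zero
      (unifIntegrable_inner_of_eLpNorm_le hp hG hC hGC hφ) hf0
  have hint : ∀ᶠ k in atTop, Integrable (f k) μ := by
    filter_upwards [hL1.eventually_lt_const ENNReal.zero_lt_top] with k hk
    exact memLp_one_iff_integrable.1 ⟨hf k, by simpa using hk⟩
  simpa using tendsto_integral_of_L1' 0 aestronglyMeasurable_zero hint hL1

end Pairing

section Growth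

variable {α E F : Type*} [MeasurableSpace α] {μ : Measure α}
  [NormedAddCommGroup E] [NormedAddCommGroup F]

theorem eLpNorm_le_of_norm_le_mul_rpow_add {q : ℝ≥0∞} (hq : 1 ≤ q) {a r : ℝ} (hr : 0 < r)
    {f : α → F} {g : α → E} {b : α → ℝ} (hg : AEStronglyMeasurable g μ)
    (hb : AEStronglyMeasurable b μ) (hf : ∀ x, ‖f x‖ ≤ a * ‖g x‖ ^ r + b x) :
    eLpNorm f q μ ≤ ‖a‖ₑ * eLpNorm g (q * ENNReal.ofReal r) μ ^ r + eLpNorm b q μ :=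
  calc eLpNorm f q μ ≤ eLpNorm (fun x => a • ‖g x‖ ^ r + b x) q μ := eLpNorm_mono_real hf
    _ ≤ eLpNorm (a • fun x => ‖g x‖ ^ r) q μ + eLpNorm b q μ :=
      eLpNorm_add_le ((hg.norm.aemeasurable.pow_const r).aestronglyMeasurable.const_smul a) hb hq
    _ = ‖a‖ₑ * eLpNorm g (q * ENNReal.ofReal r) μ ^ r + eLpNorm b q μ := by
      rw [eLpNorm_const_smul, eLpNorm_norm_rpow g hr]

theorem eLpNorm_comp_le_of_norm_le_rpow_sub_one {p : ℝ} (hp : 1 < p) {H : α → E → F} {a : ℝ}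
    {b : α → ℝ} (hb : AEStronglyMeasurable b μ) (hH : ∀ x ξ, ‖H x ξ‖ ≤ a * ‖ξ‖ ^ (p - 1) + b x)
    {g : α → E} (hg : AEStronglyMeasurable g μ) :
    eLpNorm (fun x => H x (g x)) (ENNReal.ofReal (p / (p - 1))) μ ≤
      ‖a‖ₑ * eLpNorm g (ENNReal.ofReal p) μ ^ (p - 1) +
        eLpNorm b (ENNReal.ofReal (p / (p - 1))) μ := by
  have hp1 : 0 < p - 1 := sub_pos.2 hp
  have hexp : ENNReal.ofReal (p / (p - 1)) * ENNReal.ofReal (p - 1) = ENNReal.ofReal p := by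
    rw [← ENNReal.ofReal_mul (by positivity), div_mul_cancel₀ _ hp1.ne']
  rw [← hexp]
  exact eLpNorm_le_of_norm_le_mul_rpow_add
    (ENNReal.one_le_ofReal.2 ((one_le_div hp1).2 (by linarith))) hp1 hg hb fun x => hH x (g x)

end Growth

theorem ENNReal.exists_forall_le_coe_of_tendsto {s : ℕ → ℝ≥0∞} {a : ℝ≥0∞} (hs : ∀ k, s k ≠ ∞)
    (ha : a ≠ ∞) (h : Tendsto s atTop (𝓝 a)) : ∃ B : ℝ≥0, ∀ k, s k ≤ B := by
  obtain ⟨B, hB⟩ := ((ENNReal.tendsto_toNNReal ha).comp h).bddAbove_range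
  exact ⟨B, fun k => (ENNReal.coe_toNNReal (hs k)).symm.trans_le
    (ENNReal.coe_le_coe.2 (hB ⟨k, rfl⟩))⟩

theorem stmt3_general {α : Type*} [MeasurableSpace α] (μ : Measure α) [IsFiniteMeasure μ]
    {n m : ℕ} (p : ℝ) (hp : 1 < p)
    (H : α → Eucl n → Eucl m)
    (hmeas : ∀ ξ, Measurable fun x => H x ξ) (hcont : ∀ x, Continuous (H x))
    (a : ℝ) (b : α → ℝ)
    (hb : MemLp b (ENNReal.ofReal (p / (p - 1))) μ)
    (hH : ∀ x ξ, ‖H x ξ‖ ≤ a * ‖ξ‖ ^ (p - 1) + b x)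
    (Φk Ψk : ℕ → α → Eucl n)
    (hΦk : ∀ k, MemLp (Φk k) (ENNReal.ofReal p) μ)
    (hΦbdd : ∃ C : ℝ≥0∞, C < ⊤ ∧ ∀ k, eLpNorm (Φk k) (ENNReal.ofReal p) μ ≤ C)
    (hΨk : ∀ k, MemLp (Ψk k) (ENNReal.ofReal p) μ)
    (hΨ0 : Tendsto (fun k => eLpNorm (Ψk k) (ENNReal.ofReal p) μ) atTop (𝓝 0)) :
    ∀ Φ : α → Eucl m, MemLp Φ (ENNReal.ofReal p) μ →
      Tendsto
        (fun k => ∫ x, (inner ℝ (H x (Φk k x + Ψk k x) - H x (Φk k x)) (Φ x) : ℝ) ∂μ)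
        atTop (𝓝 0) := by
  intro Φ hΦ
  set P := ENNReal.ofReal p
  set q := ENNReal.ofReal (p / (p - 1))
  have : ENNReal.HolderConjugate q P := (Real.HolderConjugate.conjExponent hp).symm.ennrealOfReal
  obtain ⟨C, hC, hΦC⟩ := hΦbdd
  obtain ⟨B, hΨB⟩ := ENNReal.exists_forall_le_coe_of_tendsto (fun k => (hΨk k).2.ne)
    ENNReal.zero_ne_top hΨ0
  have hΦΨC : ∀ k, eLpNorm (Φk k + Ψk k) P μ ≤ C + B := fun k =>
    (eLpNorm_add_le (hΦk k).1 (hΨk k).1 (ENNReal.HolderConjugate.one_le P q)).trans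
      (add_le_add (hΦC k) (hΨB k))
  set D := ‖a‖ₑ * (C + B) ^ (p - 1) + eLpNorm b q μ
  have hHD : ∀ g : α → Eucl n, AEStronglyMeasurable g μ → eLpNorm g P μ ≤ C + B →
      eLpNorm (fun x => H x (g x)) q μ ≤ D := fun g hg hgCB =>
    (eLpNorm_comp_le_of_norm_le_rpow_sub_one hp hb.1 hH hg).trans (by simp only [D]; gcongr)
  have hHΦ : ∀ k, AEStronglyMeasurable (fun x => H x (Φk k x)) μ := fun k =>
    aestronglyMeasurable_caratheodory_comp hmeas hcont (hΦk k).1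
  have hHΦΨ : ∀ k, AEStronglyMeasurable (fun x => H x (Φk k x + Ψk k x)) μ := fun k =>
    aestronglyMeasurable_caratheodory_comp hmeas hcont ((hΦk k).1.add (hΨk k).1)
  have hGD : ∀ k, eLpNorm (fun x => H x (Φk k x + Ψk k x) - H x (Φk k x)) q μ ≤ D + D := fun k =>
    (eLpNorm_sub_le (hHΦΨ k) (hHΦ k) (ENNReal.HolderConjugate.one_le q P)).trans <| add_le_add
      (hHD _ ((hΦk k).1.add (hΨk k).1) (hΦΨC k)) (hHD _ (hΦk k).1 ((hΦC k).trans le_self_add))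
  have hΦM : BoundedInMeasure μ Φk := boundedInMeasure_of_eLpNorm_le
    (ENNReal.HolderConjugate.ne_zero P q) ENNReal.ofReal_ne_top (fun k => (hΦk k).1) hC.ne hΦC
  have hΨ0' : TendstoInMeasure μ Ψk atTop 0 := tendstoInMeasure_of_tendsto_eLpNorm
    (ENNReal.HolderConjugate.ne_zero P q) (fun k => (hΨk k).1) aestronglyMeasurable_zero
    (by simpa using hΨ0)
  exact tendsto_integral_inner_of_tendstoInMeasure ENNReal.ofReal_ne_top
    (fun k => (hHΦΨ k).sub (hHΦ k)) (by finiteness) hGD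
    (tendstoInMeasure_add_sub_of_boundedInMeasure hmeas hcont hΦM hΨ0') hΦ

/-- **Perturbation lemma for Nemytskii operators.**
Let `(X, 𝒜, μ)` be a finite measure space, `p > 1`, and `H : X × ℝⁿ → ℝᵐ` a Carathéodory
function with `|H(x,ξ)| ≤ a|ξ|^{p-1} + b(x)`, `b ∈ L^{p'}`. If `Φ_k` is bounded in
`L^p(X;ℝⁿ)` and `Ψ_k → 0` strongly in `L^p(X;ℝⁿ)`, then for every `Φ ∈ L^p(X;ℝᵐ)`,
`∫ (H(x,Φ_k+Ψ_k) - H(x,Φ_k)) · Φ dμ → 0`. -/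
theorem stmt3 {α : Type*} [MeasurableSpace α] (μ : Measure α) [IsFiniteMeasure μ]
    {n m : ℕ} (p : ℝ) (hp : 1 < p)
    (H : α → Eucl n → Eucl m)
    (hmeas : ∀ ξ, Measurable fun x => H x ξ) (hcont : ∀ x, Continuous (H x))
    (a : ℝ) (ha : 0 ≤ a) (b : α → ℝ) (hb0 : ∀ x, 0 ≤ b x)
    (hb : MemLp b (ENNReal.ofReal (p / (p - 1))) μ)
    (hH : ∀ x ξ, ‖H x ξ‖ ≤ a * ‖ξ‖ ^ (p - 1) + b x)
    (Φk Ψk : ℕ → α → Eucl n)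
    (hΦk : ∀ k, MemLp (Φk k) (ENNReal.ofReal p) μ)
    (hΦbdd : ∃ C : ℝ≥0∞, C < ⊤ ∧ ∀ k, eLpNorm (Φk k) (ENNReal.ofReal p) μ ≤ C)
    (hΨk : ∀ k, MemLp (Ψk k) (ENNReal.ofReal p) μ)
    (hΨ0 : Tendsto (fun k => eLpNorm (Ψk k) (ENNReal.ofReal p) μ) atTop (𝓝 0)) :
    ∀ Φ : α → Eucl m, MemLp Φ (ENNReal.ofReal p) μ →
      Tendsto
        (fun k => ∫ x, (inner ℝ (H x (Φk k x + Ψk k x) - H x (Φk k x)) (Φ x) : ℝ) ∂μ)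
        atTop (𝓝 0) :=
  stmt3_general μ p hp H hmeas hcont a b hb hH Φk Ψk hΦk hΦbdd hΨk hΨ0
end
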